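/- arXiv:2107.06198 — 5 statements merged into one kernel-verified Lean document; each statement's English description precedes it below -/
import Mathlib

section
/- Let G be a finite cyclic group of order n. Then every sequence of 2n-1 elements of G contains a subsequence of length n whose product is the identity (Erdős–Ginzburg–Ziv theorem). -/
/-- A multiset `T` over a group is a product-one sequence if its terms can be
ordered so that their product is the identity. -/
def IsProdOne {G : Type*} [Group G] (T : Multiset G) : Prop :=
  ∃ l : List G, (l : Multiset G) = T ∧ l.prod = 1

/-- `S` has a product-one subsequence of length `n`. -/
def HasProdOneSubseqOfLen {G : Type*} [Group G] (S : Multiset G) (n : ℕ) : Prop :=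
  ∃ T ≤ S, Multiset.card T = n ∧ IsProdOne T

private lemma prod_map_aux {G : Type*} [Group G] {n : ℕ}
    (e : Multiplicative (ZMod n) ≃* G) (L : List (ZMod n)) :
    (L.map (fun z => e (Multiplicative.ofAdd z))).prod = e (Multiplicative.ofAdd L.sum) := by
  induction L with
  | nil => simp
  | cons a L ih => simp only [List.map_cons, List.prod_cons, List.sum_cons, ih, ofAdd_add, map_mul]

/-- Erdős–Ginzburg–Ziv: every sequence of `2 n - 1` elements of a cyclic group of
order `n` has a product-one subsequence of length `n`. -/
theorem egz_cyclic (G : Type*) [Group G] [Fintype G] (hG : IsCyclic G)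
    (n : ℕ) (hn : Fintype.card G = n)
    (S : Multiset G) (hS : Multiset.card S = 2 * n - 1) :
    HasProdOneSubseqOfLen S n := by
  have hcard : Nat.card G = n := by rw [Nat.card_eq_fintype_card, hn]
  have e : Multiplicative (ZMod n) ≃* G := hcard ▸ zmodCyclicMulEquiv hG
  set f : G → ZMod n := fun g => Multiplicative.toAdd (e.symm g) with hf
  set h : ZMod n → G := fun z => e (Multiplicative.ofAdd z) with hh
  have hfh : ∀ g : G, h (f g) = g := fun g => by simp [hf, hh]
  obtain ⟨t, hts, htcard, htsum⟩ := ZMod.erdos_ginzburg_ziv_multiset (S.map f)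
    (by rw [Multiset.card_map, hS])
  refine ⟨t.map h, ?_, by rw [Multiset.card_map, htcard], ?_⟩
  · calc t.map h ≤ (S.map f).map h := Multiset.map_le_map hts
      _ = S := by rw [Multiset.map_map]; simp [Function.comp, hfh]
  · refine ⟨t.toList.map h, ?_, ?_⟩
    · rw [← Multiset.map_coe, Multiset.coe_toList]
    · rw [prod_map_aux e t.toList]
      have : t.toList.sum = 0 := by
        rw [← Multiset.sum_toList] at htsum; exact htsum
      rw [this]; simp
end

section
/- Let N be a finite cyclic group of order m, M ≤ N a subgroup, u ∈ N, p a prime, and r an integer with r^p ≡ 1 (mod m) and gcd(r−1, m) = 1. If for integers 0 ≤ s < s' ≤ p−1 the elements u^{r^s} and u^{r^{s'}} lie in the same coset of M, then u ∈ M. -/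
/-!
Put `k = s' - s`, so `0 < k < p` and `k` is coprime to `p`. Modulo `m`, `r ^ p = 1` makes `r` a
power of `r ^ k`, hence `r ^ k - 1` divides `r - 1`, which is a unit; so
`r ^ s - r ^ s' = -r ^ s (r ^ k - 1)` is a unit modulo `m`, i.e. coprime to `m = |N|`.
Raising to an exponent coprime to `|N|` is invertible on `N`, so `u ^ (r ^ s - r ^ s') ∈ M`
gives `u ∈ M`.
-/

theorem Subgroup.mem_of_zpow_mem_of_isCoprime {G : Type*} [Group G] (M : Subgroup G) {u : G}
    {t n : ℤ} (hn : u ^ n = 1) (ht : IsCoprime t n) (h : u ^ t ∈ M) : u ∈ M := by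
  obtain ⟨a, b, hab⟩ := ht
  have hu : u = (u ^ t) ^ a :=
    calc u = u ^ (a * t + b * n) := by rw [hab, zpow_one]
      _ = (u ^ t) ^ a * (u ^ n) ^ b := by rw [zpow_add, mul_comm a, mul_comm b, zpow_mul, zpow_mul]
      _ = (u ^ t) ^ a := by rw [hn, one_zpow, mul_one]
  exact hu ▸ M.zpow_mem h a

theorem pow_sub_one_dvd_sub_one_of_pow_eq_one {R : Type*} [Ring R] {x : R} {p k : ℕ}
    (hx : x ^ p = 1) (hk : k.Coprime p) : x ^ k - 1 ∣ x - 1 := by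
  obtain ⟨j, hj⟩ :=
    exists_pow_eq_self_of_coprime (hk.coprime_dvd_right (orderOf_dvd_of_pow_eq_one hx))
  calc x ^ k - 1 ∣ (x ^ k) ^ j - 1 := sub_one_dvd_pow_sub_one _ _
    _ = x - 1 := by rw [hj]

theorem isUnit_pow_sub_pow_of_pow_eq_one {R : Type*} [CommRing R] {x : R} {p s s' : ℕ}
    (hx : x ^ p = 1) (hp : p ≠ 0) (hx1 : IsUnit (x - 1)) (hss : s ≤ s')
    (hk : (s' - s).Coprime p) : IsUnit (x ^ s - x ^ s') := by
  have hxk : IsUnit (x ^ (s' - s) - 1) :=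
    isUnit_of_dvd_unit (pow_sub_one_dvd_sub_one_of_pow_eq_one hx hk) hx1
  have hsplit : x ^ s - x ^ s' = -(x ^ s * (x ^ (s' - s) - 1)) := by
    rw [mul_sub, ← pow_add, Nat.add_sub_cancel' hss]
    ring
  rw [hsplit]
  exact (((IsUnit.of_pow_eq_one hx hp).pow s).mul hxk).neg

theorem mem_of_same_coset_general (N : Type*) [Group N] [Fintype N]
    (m : ℕ) (hm : Fintype.card N = m) (M : Subgroup N) (u : N)
    (p : ℕ) (hp : p.Prime) (r : ℤ)
    (hr : r ^ p ≡ 1 [ZMOD m]) (hcop : Int.gcd (r - 1) (m : ℤ) = 1)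
    (s s' : ℕ) (hss : s < s') (hs' : s' ≤ p - 1)
    (h : u ^ (r ^ s) * (u ^ (r ^ s'))⁻¹ ∈ M) : u ∈ M := by
  have hrp : (r : ZMod m) ^ p = 1 := by
    exact_mod_cast (ZMod.intCast_eq_intCast_iff _ _ m).mpr hr
  have hr1 : IsUnit ((r : ZMod m) - 1) := by
    exact_mod_cast (ZMod.coe_int_isUnit_iff_isCoprime (r - 1) m).mpr
      (Int.isCoprime_iff_gcd_eq_one.mpr (Int.gcd_comm _ _ ▸ hcop))
  have hk : (s' - s).Coprime p :=
    (Nat.coprime_of_lt_prime (by omega) (by omega) hp).symm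
  have hunit : IsUnit ((r ^ s - r ^ s' : ℤ) : ZMod m) := by
    exact_mod_cast isUnit_pow_sub_pow_of_pow_eq_one hrp hp.ne_zero hr1 hss.le hk
  refine M.mem_of_zpow_mem_of_isCoprime (n := m) ?_
    ((ZMod.coe_int_isUnit_iff_isCoprime _ m).mp hunit).symm (by rwa [zpow_sub])
  rw [zpow_natCast, ← hm, pow_card_eq_one]

/-- In a cyclic group `N` of order `m`, with `p` prime, `r^p ≡ 1 (mod m)` and
`gcd(r - 1, m) = 1`: if `u^(r^s)` and `u^(r^s')` lie in the same coset of a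
subgroup `M` (with `0 ≤ s < s' ≤ p - 1`), then `u ∈ M`. -/
theorem mem_of_same_coset (N : Type*) [Group N] [Fintype N] (hN : IsCyclic N)
    (m : ℕ) (hm : Fintype.card N = m) (M : Subgroup N) (u : N)
    (p : ℕ) (hp : p.Prime) (r : ℤ)
    (hr : r ^ p ≡ 1 [ZMOD m]) (hcop : Int.gcd (r - 1) (m : ℤ) = 1)
    (s s' : ℕ) (hss : s < s') (hs' : s' ≤ p - 1)
    (h : u ^ (r ^ s) * (u ^ (r ^ s'))⁻¹ ∈ M) : u ∈ M :=
  mem_of_same_coset_general N m hm M u p hp r hr hcop s s' hss hs' h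
end

section
/- Let N be a finite cyclic group of order m, u ∈ N with u ≠ 1, p a prime, and r an integer with r^p ≡ 1 (mod m) and gcd(r−1, m) = 1. Then for integers 0 ≤ s < s' ≤ p−1, we have u^{r^s} ≠ u^{r^{s'}}. -/
/-! The difference `r ^ s' - r ^ s = r ^ s * (r ^ (s' - s) - 1)` is coprime to `m`: the factor `r ^ s`
because `r` is invertible mod `m`, and the factor `r ^ t - 1` (with `0 < t < p`) because any common
divisor `d` of `r ^ t - 1` and `m` satisfies `r ^ t ≡ r ^ p ≡ 1 [ZMOD d]`, hence `r ≡ 1 [ZMOD d]` as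
`gcd(t, p) = 1`, so `d ∣ gcd(r - 1, m) = 1`. An exponent coprime to the group order kills only `1`. -/

theorem Int.isCoprime_of_modEq_one {a n : ℤ} (h : a ≡ 1 [ZMOD n]) : IsCoprime a n := by
  obtain ⟨c, hc⟩ := h.dvd
  exact ⟨1, c, by linarith⟩

theorem Int.ModEq.pow_gcd_eq_one {r : ℤ} {n a b : ℕ} (ha : r ^ a ≡ 1 [ZMOD n])
    (hb : r ^ b ≡ 1 [ZMOD n]) : r ^ a.gcd b ≡ 1 [ZMOD n] := by
  rw [← ZMod.intCast_eq_intCast_iff] at ha hb ⊢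
  push_cast at ha hb ⊢
  exact _root_.pow_gcd_eq_one.2 ⟨ha, hb⟩

theorem Int.isCoprime_pow_sub_one_of_pow_modEq_one {r : ℤ} {n p t : ℕ} (hp : p.Prime)
    (ht : 0 < t) (htp : t < p) (hr : r ^ p ≡ 1 [ZMOD n]) (hcop : IsCoprime (r - 1) n) :
    IsCoprime (r ^ t - 1) n := by
  rw [Int.isCoprime_iff_gcd_eq_one] at hcop ⊢
  set g := Int.gcd (r ^ t - 1) n
  have hgn : (g : ℤ) ∣ n := Int.gcd_dvd_right _ _
  have hrt : r ^ t ≡ 1 [ZMOD g] := (Int.modEq_iff_dvd.2 (Int.gcd_dvd_left _ _)).symm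
  have hr1 : r ≡ 1 [ZMOD g] := by
    have htp' : t.gcd p = 1 := (Nat.coprime_of_lt_prime ht.ne' htp hp).symm
    simpa [htp'] using hrt.pow_gcd_eq_one (hr.of_dvd hgn)
  exact Nat.eq_one_of_dvd_one (hcop ▸ Int.dvd_gcd (dvd_sub_comm.1 hr1.dvd) hgn)

theorem eq_one_of_zpow_eq_one_of_isCoprime_card {G : Type*} [Group G] {x : G} {k : ℤ}
    (hk : IsCoprime k (Nat.card G)) (hx : x ^ k = 1) : x = 1 := by
  have hunit : IsUnit (orderOf x : ℤ) :=
    hk.isUnit_of_dvd' (orderOf_dvd_iff_zpow_eq_one.2 hx)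
      (Int.natCast_dvd_natCast.2 (orderOf_dvd_natCard x))
  exact orderOf_eq_one_iff.1 (Nat.isUnit_iff.1 (Int.ofNat_isUnit.1 hunit))

theorem pow_ne_pow_general (N : Type*) [Group N] [Fintype N]
    (m : ℕ) (hm : Fintype.card N = m) (u : N) (hu : u ≠ 1)
    (p : ℕ) (hp : p.Prime) (r : ℤ)
    (hr : r ^ p ≡ 1 [ZMOD m]) (hcop : Int.gcd (r - 1) (m : ℤ) = 1)
    (s s' : ℕ) (hss : s < s') (hs' : s' ≤ p - 1) :
    u ^ (r ^ s) ≠ u ^ (r ^ s') := by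
  intro h
  have hdiff : r ^ s' - r ^ s = r ^ s * (r ^ (s' - s) - 1) := by
    rw [mul_sub, ← pow_add, Nat.add_sub_cancel' hss.le, mul_one]
  have hr_cop : IsCoprime r m :=
    (IsCoprime.pow_left_iff hp.pos).1 (Int.isCoprime_of_modEq_one hr)
  have hdiff_cop : IsCoprime (r ^ s' - r ^ s) (Nat.card N) := by
    rw [hdiff, Nat.card_eq_fintype_card, hm]
    exact hr_cop.pow_left.mul_left <| Int.isCoprime_pow_sub_one_of_pow_modEq_one hp
      (by omega) (by omega) hr (Int.isCoprime_iff_gcd_eq_one.2 hcop)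
  exact hu <| eq_one_of_zpow_eq_one_of_isCoprime_card hdiff_cop <| by
    rw [zpow_sub, h, mul_inv_cancel]

/-- In a cyclic group `N` of order `m`, with `p` prime, `r^p ≡ 1 (mod m)` and
`gcd(r - 1, m) = 1`: if `u ≠ 1` and `0 ≤ s < s' ≤ p - 1`, then
`u^(r^s) ≠ u^(r^s')`. -/
theorem pow_ne_pow (N : Type*) [Group N] [Fintype N] (hN : IsCyclic N)
    (m : ℕ) (hm : Fintype.card N = m) (u : N) (hu : u ≠ 1)
    (p : ℕ) (hp : p.Prime) (r : ℤ)
    (hr : r ^ p ≡ 1 [ZMOD m]) (hcop : Int.gcd (r - 1) (m : ℤ) = 1)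
    (s s' : ℕ) (hss : s < s') (hs' : s' ≤ p - 1) :
    u ^ (r ^ s) ≠ u ^ (r ^ s') :=
  pow_ne_pow_general N m hm u hu p hp r hr hcop s s' hss hs'
end

section
/- Let N be a finite cyclic group of order m, M ≤ N, p a prime, and r an integer with r^p ≡ 1 (mod m) and gcd(r−1, m) = 1. For u ∈ N with u ∉ M, the set {u, u^r, u^{r^2}, ..., u^{r^{p-1}}} meets exactly p distinct cosets of M, and does not meet M itself. -/
open scoped Classical

/-!
The exponents `a` with `u ^ a ∈ M` form an ideal `k ℤ` of `ℤ`, with `k ∣ m` (as `u ^ m = 1`) and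
`k ≠ 1` (as `u ∉ M`). Hence both claims are statements about `x = r` in `ZMod k`: `u ^ (r ^ i)`
and `u ^ (r ^ j)` lie in the same coset iff `x ^ i = x ^ j`, and `u ^ (r ^ i) ∈ M` iff `x ^ i = 0`.
Since `x ^ p = 1` and `x ≠ 1` (because `gcd (r - 1, m) = 1`), `x` is a unit of prime order `p`.
-/

theorem Subgroup.exists_zpow_mem_iff_dvd {G : Type*} [Group G] (M : Subgroup G) (u : G) :
    ∃ k : ℕ, ∀ a : ℤ, u ^ a ∈ M ↔ (k : ℤ) ∣ a := by
  let I : Ideal ℤ :=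
    { carrier := {a | u ^ a ∈ M}
      add_mem' := fun ha hb => by simpa only [Set.mem_ofPred_eq, zpow_add] using M.mul_mem ha hb
      zero_mem' := by simpa only [Set.mem_ofPred_eq, zpow_zero] using M.one_mem
      smul_mem' := fun c a ha => by
        simpa only [Set.mem_ofPred_eq, smul_eq_mul, zpow_mul'] using M.zpow_mem ha c }
  obtain ⟨g, hg⟩ := (inferInstance : I.IsPrincipal)
  refine ⟨g.natAbs, fun a => ?_⟩
  rw [Int.natCast_natAbs, abs_dvd, ← Ideal.mem_span_singleton, ← Ideal.submodule_span_eq, ← hg]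
  rfl

theorem QuotientGroup.mk_zpow_eq_mk_zpow_iff {G : Type*} [Group G] (M : Subgroup G) (u : G)
    (a b : ℤ) : (mk (u ^ a) : G ⧸ M) = mk (u ^ b) ↔ u ^ (b - a) ∈ M := by
  rw [QuotientGroup.eq, ← zpow_neg, ← zpow_add, neg_add_eq_sub]

theorem ZMod.intCast_ne_one_of_gcd_sub_one_eq_one {k m : ℕ} (hkm : k ∣ m) (hk : k ≠ 1) {r : ℤ}
    (hcop : Int.gcd (r - 1) m = 1) : (r : ZMod k) ≠ 1 := by
  intro hr1
  have hk_dvd : (k : ℤ) ∣ r - 1 := by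
    rw [← ZMod.intCast_zmod_eq_zero_iff_dvd, Int.cast_sub, hr1, Int.cast_one, sub_self]
  exact hk (Nat.dvd_one.mp (hcop ▸ Int.dvd_gcd hk_dvd (Int.natCast_dvd_natCast.mpr hkm)))

theorem ZMod.orderOf_intCast_eq_prime {k m p : ℕ} [Fact p.Prime] (hkm : k ∣ m) (hk : k ≠ 1)
    {r : ℤ} (hr : r ^ p ≡ 1 [ZMOD m]) (hcop : Int.gcd (r - 1) m = 1) :
    orderOf (r : ZMod k) = p := by
  refine orderOf_eq_prime ?_ (intCast_ne_one_of_gcd_sub_one_eq_one hkm hk hcop)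
  rw [← Int.cast_pow, ← Int.cast_one, ZMod.intCast_eq_intCast_iff]
  exact hr.of_dvd (Int.natCast_dvd_natCast.mpr hkm)

theorem orbit_meets_p_cosets_general (N : Type*) [Group N] [Fintype N]
    (m : ℕ) (hm : Fintype.card N = m) (M : Subgroup N) (u : N) (hu : u ∉ M)
    (p : ℕ) (hp : p.Prime) (r : ℤ)
    (hr : r ^ p ≡ 1 [ZMOD m]) (hcop : Int.gcd (r - 1) (m : ℤ) = 1) :
    (Finset.image (fun i : ℕ => (QuotientGroup.mk (u ^ (r ^ i)) : N ⧸ M))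
        (Finset.range p)).card = p ∧
      ∀ i < p, u ^ (r ^ i) ∉ M := by
  have := Fact.mk hp
  obtain ⟨k, hk⟩ := M.exists_zpow_mem_iff_dvd u
  have hk1 : k ≠ 1 := by
    rintro rfl
    exact hu (by simpa using (hk 1).mpr (one_dvd _))
  have hkm : k ∣ m := by
    have h : u ^ (m : ℤ) ∈ M := by simp [← hm, M.one_mem]
    exact Int.natCast_dvd_natCast.mp ((hk m).mp h)
  have hord : orderOf (r : ZMod k) = p := ZMod.orderOf_intCast_eq_prime hkm hk1 hr hcop
  refine ⟨?_, fun i _ hi => ?_⟩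
  · rw [Finset.card_image_of_injOn, Finset.card_range]
    intro i hi j hj hij
    rw [QuotientGroup.mk_zpow_eq_mk_zpow_iff, hk, ← ZMod.intCast_zmod_eq_zero_iff_dvd] at hij
    push_cast at hij
    exact pow_injOn_Iio_orderOf (x := (r : ZMod k)) (by simpa [hord] using hi)
      (by simpa [hord] using hj) (sub_eq_zero.mp hij).symm
  · have hunit : IsUnit (r : ZMod k) := IsUnit.of_pow_eq_one
      (hord ▸ pow_orderOf_eq_one _) hp.ne_zero
    have : Nontrivial (ZMod k) := ZMod.nontrivial_iff.mpr hk1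
    rw [hk, ← ZMod.intCast_zmod_eq_zero_iff_dvd, Int.cast_pow] at hi
    exact (hunit.pow i).ne_zero hi

/-- In a cyclic group `N` of order `m`, with `p` prime, `r^p ≡ 1 (mod m)` and
`gcd(r - 1, m) = 1`: for `u ∉ M`, the set `{u, u^r, …, u^(r^(p-1))}` meets
exactly `p` distinct cosets of `M`, and does not meet `M` itself. -/
theorem orbit_meets_p_cosets (N : Type*) [Group N] [Fintype N] (hN : IsCyclic N)
    (m : ℕ) (hm : Fintype.card N = m) (M : Subgroup N) (u : N) (hu : u ∉ M)
    (p : ℕ) (hp : p.Prime) (r : ℤ)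
    (hr : r ^ p ≡ 1 [ZMOD m]) (hcop : Int.gcd (r - 1) (m : ℤ) = 1) :
    (Finset.image (fun i : ℕ => (QuotientGroup.mk (u ^ (r ^ i)) : N ⧸ M))
        (Finset.range p)).card = p ∧
      ∀ i < p, u ^ (r ^ i) ∉ M :=
  orbit_meets_p_cosets_general N m hm M u hu p hp r hr hcop
end

section
/- Let G be a finite abelian group. Then E(G) = d(G) + |G|, where d(G) is the small Davenport constant of G and E(G) is the smallest integer t such that every sequence of t elements of G contains a zero-sum subsequence of length |G|. -/
/-- `S` has a zero-sum subsequence of length `n`. -/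
def HasZeroSumSubseqOfLen {G : Type*} [AddCommGroup G] (S : Multiset G) (n : ℕ) : Prop :=
  ∃ T ≤ S, Multiset.card T = n ∧ T.sum = 0

/-- A sequence is zero-sum free if no nonempty subsequence sums to zero. -/
def ZeroSumFree {G : Type*} [AddCommGroup G] (S : Multiset G) : Prop :=
  ∀ T ≤ S, T ≠ 0 → T.sum ≠ 0

/-- `EGZconst G` is the smallest `t` such that every sequence of `t` elements
of `G` has a zero-sum subsequence of length `|G|`. -/
noncomputable def EGZconst (G : Type*) [AddCommGroup G] : ℕ :=
  sInf {t | ∀ S : Multiset G, Multiset.card S = t →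
    HasZeroSumSubseqOfLen S (Nat.card G)}

/-- The small Davenport constant: the maximal length of a zero-sum free
sequence over `G`. -/
noncomputable def smallDavenport (G : Type*) [AddCommGroup G] : ℕ :=
  sSup {k | ∃ S : Multiset G, Multiset.card S = k ∧ ZeroSumFree S}

/-!
The lower bound is witnessed by a zero-sum free sequence of length `d(G)` followed by `|G| - 1`
zeros. For the upper bound (Gao), translate a sequence `S` of length `|G| + d(G)` so that `0` is a
most frequent term, of multiplicity `h`. By Scherk's theorem the sets of sums of at most `k` terms
grow fast enough that every sequence of at least `|G|` terms, none repeated more than `h` times,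
has a nonempty zero-sum subsequence of length at most `h`. Peeling off such blocks from `S` with
its zeros removed, and using `d(G)` once fewer than `|G|` terms are left, gives a zero-sum
subsequence of length in `[|G| - h, |G|)`, which the zeros complete to length `|G|`.
-/

open scoped Pointwise

open Finset in
/-- Scherk's theorem. The Dyson `e`-transform keeps `#A + #B` and the hypotheses and does not grow
`A + B`; an `e ∈ A` with `e + b ∉ A` for some `b ∈ B` makes `B` strictly smaller. -/
theorem Finset.card_add_card_le_card_add_add_one {G : Type*} [AddCommGroup G] [DecidableEq G]
    {A B : Finset G} (hA : 0 ∈ A) (hB : 0 ∈ B)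
    (hAB : ∀ a ∈ A, ∀ b ∈ B, a + b = 0 → a = 0) :
    #A + #B ≤ #(A + B) + 1 := by
  induction hn : #B using Nat.strong_induction_on generalizing A B with
  | _ n ih =>
  subst hn
  by_cases hB0 : B ⊆ {0}
  · rw [(subset_singleton_iff.1 hB0).resolve_left (ne_empty_of_mem hB)]
    simp
  obtain ⟨b, hb, hb0⟩ : ∃ b ∈ B, b ≠ 0 := by simpa [subset_iff] using hB0
  obtain ⟨e, he, heb⟩ : ∃ e ∈ A, e + b ∉ A := by
    by_contra! h
    have hbA : b +ᵥ A = A := eq_of_subset_of_card_le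
      (fun _ hx => by
        obtain ⟨a, ha, rfl⟩ := mem_vadd_finset.1 hx
        simpa [add_comm] using h a ha)
      (card_vadd_finset b A).ge
    obtain ⟨a, ha, hab⟩ := mem_vadd_finset.1 (hbA.symm ▸ hA : (0 : G) ∈ b +ᵥ A)
    rw [vadd_eq_add, add_comm] at hab
    obtain rfl := hAB a ha b hb hab
    exact hb0 (by simpa using hab)
  set x := addDysonETransform e (A, B)
  have hx₁ : 0 ∈ x.1 := mem_union_left _ hA
  have hx₂ : 0 ∈ x.2 := mem_inter.2 ⟨hB, mem_vadd_finset.2 ⟨e, he, by simp⟩⟩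
  have hx : ∀ a ∈ x.1, ∀ c ∈ x.2, a + c = 0 → a = 0 := by
    intro a ha c hc hac
    obtain ⟨hcB, hcA⟩ := mem_inter.1 hc
    obtain ha | ha := mem_union.1 ha
    · exact hAB a ha c hcB hac
    obtain ⟨b₁, hb₁, rfl⟩ := mem_vadd_finset.1 ha
    obtain ⟨a₁, ha₁, rfl⟩ := mem_vadd_finset.1 hcA
    have h₁ : a₁ + b₁ = 0 := by rw [← hac]; simp only [vadd_eq_add]; abel
    obtain rfl := hAB a₁ ha₁ b₁ hb₁ h₁
    obtain rfl : b₁ = 0 := by simpa using h₁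
    obtain rfl := hAB e he _ hcB (by simp)
    simp
  have hxB : #x.2 < #B := by
    refine card_lt_card ⟨inter_subset_left, fun hsub => heb ?_⟩
    obtain ⟨a, ha, hab⟩ := mem_vadd_finset.1 (mem_inter.1 (hsub hb)).2
    simpa [← hab] using ha
  have hcard : #x.1 + #x.2 = #A + #B := addDysonETransform.card e (A, B)
  have hsub : #(x.1 + x.2) ≤ #(A + B) := card_le_card (addDysonETransform.subset e (A, B))
  linarith [ih _ hxB hx₁ hx₂ hx rfl]

namespace Multiset

variable {G : Type*} [AddCommGroup G] [DecidableEq G]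

def subsumsOfCardLE (S : Multiset G) (k : ℕ) : Finset G :=
  ((S.powerset.filter (card · ≤ k)).map sum).toFinset

theorem mem_subsumsOfCardLE {S : Multiset G} {k : ℕ} {y : G} :
    y ∈ S.subsumsOfCardLE k ↔ ∃ T ≤ S, card T ≤ k ∧ T.sum = y := by
  simp [subsumsOfCardLE, and_assoc]

theorem zero_mem_subsumsOfCardLE (S : Multiset G) (k : ℕ) : 0 ∈ S.subsumsOfCardLE k :=
  mem_subsumsOfCardLE.2 ⟨0, zero_le S, by simp, sum_zero⟩

/-- Scherk's theorem applied to `{0} ∪ {a | k < count a S}` and the sums of at most `k` terms. -/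
theorem card_subsumsOfCardLE_add_le {S : Multiset G} {k : ℕ}
    (hS : ∀ T ≤ S, T ≠ 0 → card T ≤ k + 1 → T.sum ≠ 0) :
    (S.subsumsOfCardLE k).card + (S.toFinset.filter (k < count · S)).card ≤
      (S.subsumsOfCardLE (k + 1)).card := by
  set F := S.toFinset.filter (k < count · S)
  have hcons : ∀ x ∈ F, ∀ y ∈ S.subsumsOfCardLE k,
      ∃ T ≤ S, T ≠ 0 ∧ card T ≤ k + 1 ∧ T.sum = x + y := by
    intro x hx y hy
    obtain ⟨T, hTS, hTk, rfl⟩ := mem_subsumsOfCardLE.1 hy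
    refine ⟨x ::ₘ T, ?_, cons_ne_zero, by simpa using hTk, sum_cons x T⟩
    have hxS : k < count x S := (Finset.mem_filter.1 hx).2
    rw [le_iff_count]
    intro a
    have := count_le_of_le a hTS
    have := count_le_card a T
    rw [count_cons]
    split_ifs with hax
    · subst hax; omega
    · omega
  have h0F : 0 ∉ F := fun h0 => by
    obtain ⟨T, hTS, hT0, hTk, hTs⟩ := hcons 0 h0 0 (zero_mem_subsumsOfCardLE S k)
    exact hS T hTS hT0 hTk (by simpa using hTs)
  have hscherk := Finset.card_add_card_le_card_add_add_one (Finset.mem_insert_self 0 F)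
    (zero_mem_subsumsOfCardLE S k) (by
      intro x hx y hy hxy
      obtain rfl | hxF := Finset.mem_insert.1 hx
      · rfl
      obtain ⟨T, hTS, hT0, hTk, hTs⟩ := hcons x hxF y hy
      exact absurd (hTs.trans hxy) (hS T hTS hT0 hTk))
  have hsub : insert 0 F + S.subsumsOfCardLE k ⊆ S.subsumsOfCardLE (k + 1) := by
    intro z hz
    obtain ⟨x, hx, y, hy, rfl⟩ := Finset.mem_add.1 hz
    obtain rfl | hxF := Finset.mem_insert.1 hx
    · obtain ⟨T, hTS, hTk, rfl⟩ := mem_subsumsOfCardLE.1 hy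
      exact mem_subsumsOfCardLE.2 ⟨T, hTS, by omega, (zero_add _).symm⟩
    · obtain ⟨T, hTS, -, hTk, hTs⟩ := hcons x hxF y hy
      exact mem_subsumsOfCardLE.2 ⟨T, hTS, hTk, hTs⟩
  rw [Finset.card_insert_of_notMem h0F] at hscherk
  have := Finset.card_le_card hsub
  omega

theorem sum_min_count_add_one_le_card_subsumsOfCardLE {S : Multiset G} {K : ℕ}
    (hS : ∀ T ≤ S, T ≠ 0 → card T ≤ K → T.sum ≠ 0) {k : ℕ} (hk : k ≤ K) :
    ∑ a ∈ S.toFinset, min (count a S) k + 1 ≤ (S.subsumsOfCardLE k).card := by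
  induction k with
  | zero => simpa using Finset.card_pos.2 ⟨0, zero_mem_subsumsOfCardLE S 0⟩
  | succ k ih =>
    have hstep := card_subsumsOfCardLE_add_le fun T hTS hT0 hTk => hS T hTS hT0 (hTk.trans hk)
    have hsum : ∑ a ∈ S.toFinset, min (count a S) (k + 1) =
        ∑ a ∈ S.toFinset, min (count a S) k + (S.toFinset.filter (k < count · S)).card := by
      rw [Finset.card_filter, ← Finset.sum_add_distrib]
      refine Finset.sum_congr rfl fun a _ => ?_
      split_ifs <;> omega
    have := ih (by omega)
    omega

theorem exists_le_ne_zero_card_le_sum_eq_zero [Finite G] {S : Multiset G} {K : ℕ}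
    (hS : Nat.card G ≤ card S) (hK : ∀ a, count a S ≤ K) :
    ∃ T ≤ S, T ≠ 0 ∧ card T ≤ K ∧ T.sum = 0 := by
  by_contra! h
  have hlow := sum_min_count_add_one_le_card_subsumsOfCardLE h le_rfl
  have hsum : ∑ a ∈ S.toFinset, min (count a S) K = card S := by
    rw [← toFinset_sum_count_eq S]
    exact Finset.sum_congr rfl fun a _ => min_eq_left (hK a)
  have := Fintype.ofFinite G
  have := (S.subsumsOfCardLE K).card_le_univ
  rw [Nat.card_eq_fintype_card] at hS
  omega

end Multiset

open Multiset

section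

variable {G : Type*} [AddCommGroup G]

theorem ZeroSumFree.card_lt [Finite G] {S : Multiset G} (hS : ZeroSumFree S) :
    card S < Nat.card G := by
  classical
  by_contra! h
  obtain ⟨T, hTS, hT0, -, hT⟩ :=
    exists_le_ne_zero_card_le_sum_eq_zero h fun a => count_le_card a S
  exact hS T hTS hT0 hT

theorem bddAbove_card_zeroSumFree [Finite G] :
    BddAbove {k | ∃ S : Multiset G, card S = k ∧ ZeroSumFree S} :=
  ⟨Nat.card G, by rintro _ ⟨S, rfl, hS⟩; exact hS.card_lt.le⟩

theorem exists_zeroSumFree_card_eq_smallDavenport [Finite G] :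
    ∃ S : Multiset G, card S = smallDavenport G ∧ ZeroSumFree S :=
  Nat.sSup_mem (s := {k | ∃ S : Multiset G, card S = k ∧ ZeroSumFree S})
    ⟨0, 0, rfl, fun _ hT hT0 => absurd (le_zero.1 hT) hT0⟩ bddAbove_card_zeroSumFree

theorem exists_le_ne_zero_sum_eq_zero_of_smallDavenport_lt [Finite G] {S : Multiset G}
    (hS : smallDavenport G < card S) : ∃ T ≤ S, T ≠ 0 ∧ T.sum = 0 := by
  by_contra! h
  exact (le_csSup bddAbove_card_zeroSumFree ⟨S, rfl, h⟩).not_gt hS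

theorem exists_le_ne_zero_sum_eq_zero_card_le_or_card_lt [Finite G] [DecidableEq G]
    {U : Multiset G} {h : ℕ} (hU : ∀ a, count a U ≤ h) (hd : smallDavenport G < card U) :
    ∃ P ≤ U, P ≠ 0 ∧ P.sum = 0 ∧ (card P ≤ h ∨ card U < Nat.card G) := by
  by_cases hn : card U < Nat.card G
  · obtain ⟨P, hPU, hP0, hP⟩ := exists_le_ne_zero_sum_eq_zero_of_smallDavenport_lt hd
    exact ⟨P, hPU, hP0, hP, .inr hn⟩
  · obtain ⟨P, hPU, hP0, hPh, hP⟩ := exists_le_ne_zero_card_le_sum_eq_zero (not_lt.1 hn) hU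
    exact ⟨P, hPU, hP0, hP, .inl hPh⟩

theorem exists_le_sum_eq_zero_le_card_lt_max [Finite G] [DecidableEq G] {h : ℕ}
    (U : Multiset G) (hU : ∀ a, count a U ≤ h) (m : ℕ)
    (hm : m + smallDavenport G ≤ card U) :
    ∃ B ≤ U, B.sum = 0 ∧ m ≤ card B ∧ card B < max (m + h) (Nat.card G) := by
  induction hc : card U using Nat.strong_induction_on generalizing U m with
  | _ c ih =>
  subst hc
  rcases Nat.eq_zero_or_pos m with rfl | hm0
  · exact ⟨0, zero_le U, sum_zero, le_rfl, lt_max_of_lt_right (by simp)⟩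
  obtain ⟨P, hPU, hP0, hP, hPshort⟩ :=
    exists_le_ne_zero_sum_eq_zero_card_le_or_card_lt hU (by omega)
  have hPU' := card_le_card hPU
  by_cases hmP : m ≤ card P
  · exact ⟨P, hPU, hP, hmP, by omega⟩
  have hcard : card (U - P) = card U - card P := card_sub hPU
  obtain ⟨B, hBU, hB, hmB, hBlt⟩ := ih _ (by have := card_pos.2 hP0; omega) (U - P)
    (fun a => (count_sub a U P).trans_le ((Nat.sub_le _ _).trans (hU a)))
    (m - card P) (by omega) rfl
  by_cases hmB' : m ≤ card B
  · exact ⟨B, hBU.trans (Multiset.sub_le_self U P), hB, hmB', by omega⟩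
  -- `P + B` cannot overshoot: either `card P ≤ h` and `card B < m`, or `P + B ≤ U` and
  -- `card U < |G|`.
  have hPB := (le_tsub_iff_left hPU).1 hBU
  refine ⟨P + B, hPB, by rw [sum_add, hP, hB, add_zero], by rw [card_add]; omega, ?_⟩
  have := card_le_card hPB
  rw [card_add] at this ⊢
  omega

theorem HasZeroSumSubseqOfLen.mono {S S' : Multiset G} {n : ℕ} (h : HasZeroSumSubseqOfLen S n)
    (hS : S ≤ S') : HasZeroSumSubseqOfLen S' n :=
  let ⟨T, hTS, hT⟩ := h; ⟨T, hTS.trans hS, hT⟩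

theorem HasZeroSumSubseqOfLen.map_add [Finite G] {S : Multiset G}
    (h : HasZeroSumSubseqOfLen S (Nat.card G)) (g : G) :
    HasZeroSumSubseqOfLen (S.map (· + g)) (Nat.card G) := by
  obtain ⟨T, hTS, hT, hT0⟩ := h
  refine ⟨T.map (· + g), map_le_map hTS, by rw [card_map, hT], ?_⟩
  rw [sum_map_add, map_id', hT0, map_const', sum_replicate, hT, card_nsmul_eq_zero', zero_add]

theorem hasZeroSumSubseqOfLen_of_count_le_count_zero [Finite G] [DecidableEq G] {S : Multiset G}
    (hS : card S = Nat.card G + smallDavenport G) (hmax : ∀ a, count a S ≤ count 0 S) :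
    HasZeroSumSubseqOfLen S (Nat.card G) := by
  set h := count 0 S
  have hzeros : replicate h (0 : G) ≤ S := le_count_iff_replicate_le.1 le_rfl
  by_cases hn : Nat.card G ≤ h
  · exact ⟨replicate _ 0, ((replicate_le_replicate 0).2 hn).trans hzeros, card_replicate ..,
      by simp⟩
  set U := S - replicate h 0
  have hcardU : card U = card S - h := by rw [card_sub hzeros, card_replicate]
  obtain ⟨B, hBU, hB, hnB, hBn⟩ := exists_le_sum_eq_zero_le_card_lt_max U
    (fun a => (count_sub a S _).trans_le ((Nat.sub_le _ _).trans (hmax a)))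
    (Nat.card G - h) (by omega)
  refine ⟨B + replicate (Nat.card G - card B) 0, ?_,
    by simp only [card_add, card_replicate]; omega, by simp [hB]⟩
  calc B + replicate (Nat.card G - card B) 0 ≤ U + replicate h 0 :=
        add_le_add hBU ((replicate_le_replicate 0).2 (by omega))
    _ = S := tsub_add_cancel_of_le hzeros

theorem hasZeroSumSubseqOfLen_of_card_eq [Finite G] (S : Multiset G)
    (hS : card S = Nat.card G + smallDavenport G) : HasZeroSumSubseqOfLen S (Nat.card G) := by
  classical
  obtain ⟨g, hg⟩ := Finite.exists_max (count · S)
  have hcount : ∀ a, count a (S.map (· - g)) = count (a + g) S := fun a => by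
    simpa using count_map_eq_count' _ S (sub_left_injective (b := g)) (a + g)
  have h := hasZeroSumSubseqOfLen_of_count_le_count_zero (S := S.map (· - g))
    (by rw [card_map, hS]) (fun a => by simpa [hcount] using hg (a + g))
  simpa [map_map, Function.comp_def] using h.map_add g

theorem not_hasZeroSumSubseqOfLen_add_replicate_zero {S : Multiset G} (hS : ZeroSumFree S)
    {k ℓ : ℕ} (hkℓ : k < ℓ) : ¬ HasZeroSumSubseqOfLen (S + replicate k 0) ℓ := by
  classical
  rintro ⟨T, hT, hTℓ, hT0⟩
  obtain ⟨j, hjk, hj⟩ := le_replicate_iff.1 (inter_le_right : T ∩ replicate k (0 : G) ≤ _)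
  have hsplit := sub_add_inter T (replicate k 0)
  rw [hj] at hsplit
  have hsum := congrArg sum hsplit
  rw [sum_add, sum_replicate, smul_zero, add_zero, hT0] at hsum
  have hcard := congrArg card hsplit
  rw [card_add, card_replicate] at hcard
  refine hS _ (Multiset.sub_le_iff_le_add.2 hT) (fun h => ?_) hsum
  rw [h, card_zero] at hcard
  omega

theorem exists_card_eq_not_hasZeroSumSubseqOfLen [Finite G] :
    ∃ S : Multiset G, card S = smallDavenport G + Nat.card G - 1 ∧
      ¬ HasZeroSumSubseqOfLen S (Nat.card G) := by
  obtain ⟨S, hS, hSfree⟩ := exists_zeroSumFree_card_eq_smallDavenport (G := G)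
  have hn := Nat.card_pos (α := G)
  refine ⟨S + replicate (Nat.card G - 1) 0, ?_,
    not_hasZeroSumSubseqOfLen_add_replicate_zero hSfree (by omega)⟩
  rw [card_add, card_replicate]
  omega

theorem forall_hasZeroSumSubseqOfLen_of_le {n t s : ℕ} (hts : t ≤ s)
    (ht : ∀ S : Multiset G, card S = t → HasZeroSumSubseqOfLen S n) :
    ∀ S : Multiset G, card S = s → HasZeroSumSubseqOfLen S n := by
  intro S hS
  obtain ⟨T, hT⟩ := card_pos_iff_exists_mem.1
    (by rw [card_powersetCard]; exact Nat.choose_pos (by omega) : 0 < card (powersetCard t S))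
  obtain ⟨hTS, hTt⟩ := mem_powersetCard.1 hT
  exact (ht T hTt).mono hTS

end

/-- Gao's theorem: for a finite abelian group `G`, `E(G) = d(G) + |G|`. -/
theorem EGZconst_eq_davenport_add_card (G : Type*) [AddCommGroup G] [Finite G] :
    EGZconst G = smallDavenport G + Nat.card G := by
  have hmem : smallDavenport G + Nat.card G ∈
      {t | ∀ S : Multiset G, card S = t → HasZeroSumSubseqOfLen S (Nat.card G)} :=
    fun S hS => hasZeroSumSubseqOfLen_of_card_eq S (by omega)
  refine le_antisymm (Nat.sInf_le hmem) (le_csInf ⟨_, hmem⟩ fun t ht => ?_)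
  by_contra! hlt
  obtain ⟨S, hS, hSnot⟩ := exists_card_eq_not_hasZeroSumSubseqOfLen (G := G)
  exact hSnot (forall_hasZeroSumSubseqOfLen_of_le (by omega) ht S hS)
end
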